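/- Let T₁,…,Tₙ be pairwise commuting N×N upper-triangular complex matrices. Then (λ₁,…,λₙ) ∈ ℂⁿ is a joint eigenvalue of (T₁,…,Tₙ) if and only if there exists k ∈ {1,…,N} such that λ_i = (T_i)_{kk} for every i = 1,…,n; that is, the set of joint eigenvalues of a commuting tuple of matrices coincides with the set of joint diagonal coefficients in any simultaneous upper-triangularization. -/

import Mathlib

/-!
If `v` is a joint eigenvector and `k` is the last index with `v k ≠ 0`, the `k`-th coordinate of
`Tᵢ v = λᵢ v` reads `(Tᵢ)ₖₖ vₖ = λᵢ vₖ`.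

Conversely, the commuting matrices `Mᵢ = Tᵢ - λᵢ` map `W = span (e_j : j ≤ k)` into the proper
subspace `span (e_j : j < k)`. Commuting operators whose images of an invariant subspace `W` do not
jointly span `W` have a common kernel vector in `W`. This goes by induction on the number of
operators: the Fitting decomposition of the last one, `f`, splits `W` into a part where `f` is
invertible, hence contained in `f W`, and a part where `f` is nilpotent; there the induction
hypothesis applies, because a common kernel vector `x` of the other operators would give the common
kernel vector `fᵐ x ≠ 0` with `fᵐ⁺¹ x = 0` of all of them.
-/

open Set LinearMap

namespace Module.End

variable {R U : Type*} [Ring R] [AddCommGroup U] [Module R U]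

theorem mapsTo_pow {f : Module.End R U} {W : Submodule R U} (hf : MapsTo f W W) (m : ℕ) :
    MapsTo (f ^ m) W W := by
  simpa only [coe_pow] using hf.iterate m

theorem map_pow_le_map {f : Module.End R U} {W : Submodule R U} (hf : MapsTo f W W) {d : ℕ}
    (hd : 1 ≤ d) : W.map (f ^ d) ≤ W.map f := by
  obtain ⟨m, rfl⟩ := Nat.exists_eq_add_of_le' hd
  rw [pow_succ', mul_eq_comp, Submodule.map_comp]
  exact Submodule.map_mono (Submodule.map_le_iff_le_comap.mpr (mapsTo_pow hf m))

theorem exists_pow_apply_ne_zero_and_apply_eq_zero (f : Module.End R U) {x : U} (hx : x ≠ 0)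
    {d : ℕ} (hd : (f ^ d) x = 0) : ∃ m, (f ^ m) x ≠ 0 ∧ f ((f ^ m) x) = 0 := by
  induction d with
  | zero => exact absurd hd (by simpa using hx)
  | succ d ih =>
    by_cases hd' : (f ^ d) x = 0
    · exact ih hd'
    · exact ⟨d, hd', by rwa [← mul_apply, ← pow_succ']⟩

variable [IsArtinian R U]

/-- The Fitting decomposition of the restriction of `f` to `W`. -/
theorem eventually_le_ker_pow_sup_map_pow (f : Module.End R U) {W : Submodule R U}
    (hf : MapsTo f W W) : ∀ᶠ d in Filter.atTop, W ≤ W ⊓ ker (f ^ d) ⊔ W.map (f ^ d) := by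
  have hf' : ∀ x ∈ W, f x ∈ W := fun _ hx ↦ hf hx
  filter_upwards [(f.restrict hf').eventually_codisjoint_ker_pow_range_pow] with d hd x hx
  obtain ⟨p, hp, q, ⟨y, rfl⟩, hpq⟩ :=
    Submodule.mem_sup.mp (codisjoint_iff.mp hd ▸ Submodule.mem_top (x := (⟨x, hx⟩ : W)))
  rw [pow_restrict] at hp hpq
  refine Submodule.mem_sup.mpr ⟨p, ⟨p.2, ?_⟩, (f ^ d) y, ⟨y, y.2, rfl⟩, ?_⟩
  · simpa [Subtype.ext_iff] using hp
  · simpa [Subtype.ext_iff] using hpq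

variable {ι : Type*}

theorem le_iSup_map_of_commute (B : ι → Module.End R U) (s : Finset ι)
    (hcomm : ∀ i ∈ s, ∀ j ∈ s, Commute (B i) (B j)) (W : Submodule R U)
    (hW : ∀ i ∈ s, MapsTo (B i) W W) (hker : ∀ x ∈ W, (∀ i ∈ s, B i x = 0) → x = 0) :
    W ≤ ⨆ i ∈ s, W.map (B i) := by
  classical
  induction s using Finset.induction_on generalizing W with
  | empty => exact fun x hx ↦ hker x hx (by simp) ▸ zero_mem _
  | insert a s _ ih =>
    set f := B a
    have hfW : MapsTo f W W := hW a (s.mem_insert_self a)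
    obtain ⟨d, hd, hfit⟩ := ((Filter.eventually_ge_atTop 1).and
      (f.eventually_le_ker_pow_sup_map_pow hfW)).exists
    have hcomm_pow : ∀ i ∈ insert a s, ∀ m : ℕ, Commute (B i) (f ^ m) :=
      fun i hi m ↦ (hcomm i hi a (s.mem_insert_self a)).pow_right m
    set G := W ⊓ ker (f ^ d)
    have hG : ∀ i ∈ s, MapsTo (B i) G G := by
      intro i hi x ⟨hxW, hxf⟩
      refine ⟨hW i (Finset.mem_insert_of_mem hi) hxW, LinearMap.mem_ker.mpr ?_⟩
      rw [← mul_apply, ← (hcomm_pow i (Finset.mem_insert_of_mem hi) d).eq, mul_apply,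
        LinearMap.mem_ker.mp hxf, map_zero]
    have hGker : ∀ x ∈ G, (∀ i ∈ s, B i x = 0) → x = 0 := by
      intro x ⟨hxW, hxf⟩ hx
      by_contra hx0
      obtain ⟨m, hm0, hm⟩ := f.exists_pow_apply_ne_zero_and_apply_eq_zero hx0 hxf
      refine hm0 (hker _ (mapsTo_pow hfW m hxW) fun i hi ↦ ?_)
      rcases Finset.mem_insert.mp hi with rfl | hi'
      · exact hm
      · rw [← mul_apply, (hcomm_pow i hi m).eq, mul_apply, hx i hi', map_zero]
    have hcomm' : ∀ i ∈ s, ∀ j ∈ s, Commute (B i) (B j) := fun i hi j hj ↦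
      hcomm i (Finset.mem_insert_of_mem hi) j (Finset.mem_insert_of_mem hj)
    calc W ≤ G ⊔ W.map (f ^ d) := hfit
      _ ≤ (⨆ i ∈ s, W.map (B i)) ⊔ W.map f :=
        sup_le_sup ((ih hcomm' G hG hGker).trans
          (iSup₂_mono fun i _ ↦ Submodule.map_mono inf_le_left)) (map_pow_le_map hfW hd)
      _ = ⨆ i ∈ insert a s, W.map (B i) := by rw [Finset.iSup_insert, sup_comm]

theorem exists_ne_zero_forall_apply_eq_zero_of_map_le (B : ι → Module.End R U) (s : Finset ι)
    (hcomm : ∀ i ∈ s, ∀ j ∈ s, Commute (B i) (B j)) {V W : Submodule R U} (hVW : V < W)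
    (hmap : ∀ i ∈ s, W.map (B i) ≤ V) : ∃ x ∈ W, x ≠ 0 ∧ ∀ i ∈ s, B i x = 0 := by
  by_contra! h
  refine hVW.not_ge ((le_iSup_map_of_commute B s hcomm W (fun i hi x hx ↦ ?_)
    fun x hx hBx ↦ ?_).trans (iSup₂_le hmap))
  · exact hVW.le (hmap i hi (Submodule.mem_map_of_mem hx))
  · by_contra hx0
    obtain ⟨i, hi, hBi⟩ := h x hx hx0
    exact hBi (hBx i hi)

end Module.End

theorem Commute.sub_smul_one {R A : Type*} [CommSemiring R] [Ring A] [Algebra R A] {a b : A}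
    (h : Commute a b) (r s : R) : Commute (a - r • 1) (b - s • 1) :=
  (h.sub_right ((Commute.one_right a).smul_right s)).sub_left
    (((Commute.one_left b).smul_left r).sub_right ((Commute.one_right _).smul_right s))

theorem exists_ne_zero_forall_lt_eq_zero {ι M : Type*} [Fintype ι] [LinearOrder ι] [Zero M]
    {v : ι → M} (hv : v ≠ 0) : ∃ k, v k ≠ 0 ∧ ∀ j, k < j → v j = 0 := by
  classical
  obtain ⟨j, hj⟩ := Function.ne_iff.mp hv
  obtain ⟨k, hk, hmax⟩ := (Finset.univ.filter (v · ≠ 0)).exists_max_image _root_.id ⟨j, by simpa⟩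
  exact ⟨k, by simpa using hk, fun j hkj ↦ by_contra fun hj ↦ (hmax j (by simpa)).not_gt hkj⟩

namespace Matrix.IsUpperTriangular

variable {ι R : Type*} [Fintype ι] [LinearOrder ι] [NonUnitalNonAssocSemiring R]
  {A : Matrix ι ι R} {v : ι → R} {k : ι}

theorem mulVec_apply_eq_zero (hA : A.IsUpperTriangular) (hv : ∀ j, k < j → v j = 0) {i : ι}
    (hi : k < i) : (A *ᵥ v) i = 0 :=
  Finset.sum_eq_zero fun j _ ↦ by
    rcases lt_or_ge j i with h | h
    · exact mul_eq_zero_of_left (hA h) _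
    · exact mul_eq_zero_of_right _ (hv j (hi.trans_le h))

theorem mulVec_apply_self (hA : A.IsUpperTriangular) (hv : ∀ j, k < j → v j = 0) :
    (A *ᵥ v) k = A k k * v k :=
  Finset.sum_eq_single k (fun j _ hjk ↦ by
    rcases hjk.lt_or_gt with h | h
    · exact mul_eq_zero_of_left (hA h) _
    · exact mul_eq_zero_of_right _ (hv j h)) (by simp)

end Matrix.IsUpperTriangular

namespace Matrix

theorem exists_ne_zero_forall_mulVec_eq_zero_of_isUpperTriangular {ι κ K : Type*} [Fintype ι]
    [LinearOrder ι] [Fintype κ] [CommRing K] [Nontrivial K] [IsArtinianRing K]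
    (M : κ → Matrix ι ι K)
    (hcomm : ∀ i j, Commute (M i) (M j)) (hM : ∀ i, (M i).IsUpperTriangular) (k : ι)
    (hk : ∀ i, M i k k = 0) : ∃ v ≠ 0, ∀ i, M i *ᵥ v = 0 := by
  set W : Submodule K (ι → K) := Submodule.pi (Set.Ioi k) fun _ ↦ ⊥
  set V : Submodule K (ι → K) := Submodule.pi (Set.Ici k) fun _ ↦ ⊥
  have mem_W : ∀ v, v ∈ W ↔ ∀ j, k < j → v j = 0 := by simp [W]
  have mem_V : ∀ v, v ∈ V ↔ ∀ j, k ≤ j → v j = 0 := by simp [V]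
  have hVW : V < W := by
    refine SetLike.lt_iff_le_and_exists.mpr ⟨fun v hv ↦ ?_, Pi.single k 1, ?_, ?_⟩
    · exact (mem_W v).mpr fun j hj ↦ (mem_V v).mp hv j hj.le
    · exact (mem_W _).mpr fun j hj ↦ Pi.single_eq_of_ne hj.ne' _
    · rw [mem_V]
      exact fun h ↦ one_ne_zero (α := K) (by simpa using h k le_rfl)
  have hmap : ∀ i ∈ Finset.univ, W.map (toLin' (M i)) ≤ V := by
    rintro i - _ ⟨v, hv, rfl⟩
    rw [SetLike.mem_coe, mem_W] at hv
    refine (mem_V _).mpr fun j hj ↦ ?_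
    obtain rfl | hkj := hj.eq_or_lt
    · rw [toLin'_apply, (hM i).mulVec_apply_self hv, hk, zero_mul]
    · exact (hM i).mulVec_apply_eq_zero hv hkj
  obtain ⟨v, -, hv0, hv⟩ := Module.End.exists_ne_zero_forall_apply_eq_zero_of_map_le
    (fun i ↦ toLin' (M i)) Finset.univ (fun i _ j _ ↦ (hcomm i j).map toLinAlgEquiv') hVW hmap
  exact ⟨v, hv0, fun i ↦ hv i (Finset.mem_univ i)⟩

end Matrix

open Matrix in
/-- for pairwise commuting upper-triangular complex matrices
`T₁,…,Tₙ`, the joint eigenvalues are exactly the joint diagonal coefficients: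
`(λ₁,…,λₙ)` is a joint eigenvalue iff there is an index `k` with
`λᵢ = (Tᵢ)ₖₖ` for all `i`. -/
theorem joint_eigenvalues_eq_joint_diagonal_coefficients
    (n N : ℕ)
    (T : Fin n → Matrix (Fin N) (Fin N) ℂ)
    (hcomm : ∀ i j, Commute (T i) (T j))
    (htri : ∀ (t : Fin n) (i j : Fin N), j < i → T t i j = 0)
    (lam : Fin n → ℂ) :
    (∃ v : Fin N → ℂ, v ≠ 0 ∧ ∀ i, (T i).mulVec v = lam i • v) ↔
      ∃ k : Fin N, ∀ i, lam i = T i k k := by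
  have hT : ∀ i, (T i).IsUpperTriangular := fun i _ _ ↦ htri i _ _
  constructor
  · rintro ⟨v, hv0, hv⟩
    obtain ⟨k, hvk, hv_above⟩ := exists_ne_zero_forall_lt_eq_zero hv0
    refine ⟨k, fun i ↦ mul_right_cancel₀ hvk ?_⟩
    rw [← (hT i).mulVec_apply_self hv_above, hv i, Pi.smul_apply, smul_eq_mul]
  · rintro ⟨k, hk⟩
    obtain ⟨v, hv0, hv⟩ := exists_ne_zero_forall_mulVec_eq_zero_of_isUpperTriangular
      (fun i ↦ T i - lam i • 1)
      (fun i j ↦ (hcomm i j).sub_smul_one (lam i) (lam j))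
      (fun i ↦ (hT i).sub (by rw [smul_one_eq_diagonal]; exact blockTriangular_diagonal _))
      k (by simp [hk])
    exact ⟨v, hv0, fun i ↦ by simpa [sub_mulVec, smul_mulVec, sub_eq_zero] using hv i⟩
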